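/- For a simple symmetric random walk, the probability that the last visit to 0 before an even time 2m occurs at time 2k is u_{2k}·u_{2m−2k}, where u_{2j} = C(2j,j)/2^{2j}. -/

import Mathlib

/-!
Encode the first `n` steps of the walk as `s : Fin n → Bool`. Almost surely every step is `±1`;
on that event `{L = 2k}` is determined by the first `2m` signs, which are uniformly distributed,
so `P (L = 2k)` is `2^(-2m)` times the number of paths with `S_{2k} = 0` and no zero in
`(2k, 2m]`. Cutting such a path at time `2k` gives a path of length `2k` ending at `0` followed by
a path of length `2(m - k)` that never returns to `0`. There are `C(2k, k)` of the former, and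
as many of the latter as paths of length `2(m - k)` ending at `0`: up to sign, a path of length
`2n + 2` avoiding `0` is an up-step followed by a path of length `2n + 1` that never reaches `-1`,
and by the reflection principle those are as many as the paths of length `2n + 1` ending at `1`.
-/

open MeasureTheory Real ProbabilityTheory

lemma Nat.sSup_setOf_le_and_eq_iff {p : ℕ → Prop} (h0 : p 0) {N k : ℕ} :
    sSup {j | j ≤ N ∧ p j} = k ↔ k ≤ N ∧ p k ∧ ∀ j ≤ N, k < j → ¬p j := by
  have hbdd : BddAbove {j | j ≤ N ∧ p j} := ⟨N, fun j hj => hj.1⟩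
  constructor
  · rintro rfl
    obtain ⟨hle, hp⟩ := Nat.sSup_mem (s := {j | j ≤ N ∧ p j}) ⟨0, Nat.zero_le _, h0⟩ hbdd
    exact ⟨hle, hp, fun j hj hlt hpj => (le_csSup hbdd ⟨hj, hpj⟩).not_gt hlt⟩
  · rintro ⟨hk, hpk, H⟩
    exact IsGreatest.csSup_eq ⟨⟨hk, hpk⟩, fun j ⟨hj, hpj⟩ => not_lt.1 fun hlt => H j hj hlt hpj⟩

lemma ENNReal.ofReal_div_two_pow_mul_div_two_pow (a b i j : ℕ) :
    ENNReal.ofReal ((a : ℝ) / 2 ^ i * ((b : ℝ) / 2 ^ j)) = ((a * b : ℕ) : ENNReal) * 2⁻¹ ^ (i + j) := by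
  rw [ENNReal.ofReal_mul (by positivity), ENNReal.ofReal_div_of_pos (by positivity),
    ENNReal.ofReal_div_of_pos (by positivity), ENNReal.ofReal_natCast, ENNReal.ofReal_natCast,
    ENNReal.ofReal_pow zero_le_two, ENNReal.ofReal_pow zero_le_two, ENNReal.ofReal_ofNat,
    div_eq_mul_inv, div_eq_mul_inv, ENNReal.inv_pow, ENNReal.inv_pow, pow_add, Nat.cast_mul]
  ring

namespace SimpleRandomWalk

open Finset

def step (b : Bool) : ℤ := if b then 1 else -1

def height {n : ℕ} (s : Fin n → Bool) (k : ℕ) : ℤ := ∑ i : Fin n with i.val < k, step (s i)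

section Paths

variable {n : ℕ}

@[simp] lemma height_zero (s : Fin n → Bool) : height s 0 = 0 := by simp [height]

lemma height_cons_succ (b : Bool) (t : Fin n → Bool) (k : ℕ) :
    height (Fin.cons b t : Fin (n + 1) → Bool) (k + 1) = step b + height t k := by
  simp [height, sum_filter, Fin.sum_univ_succ]

lemma height_append_of_le {a b : ℕ} (u : Fin a → Bool) (v : Fin b → Bool) {j : ℕ} (hj : j ≤ a) :
    height (Fin.append u v) j = height u j := by
  simp only [height, sum_filter, Fin.sum_univ_add, Fin.append_left, Fin.append_right,
    Fin.val_castAdd, Fin.val_natAdd]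
  rw [add_eq_left]
  exact sum_eq_zero fun i _ => if_neg (by omega)

lemma height_append_add {a b : ℕ} (u : Fin a → Bool) (v : Fin b → Bool) (j : ℕ) :
    height (Fin.append u v) (a + j) = height u a + height v j := by
  simp only [height, sum_filter, Fin.sum_univ_add, Fin.append_left, Fin.append_right,
    Fin.val_castAdd, Fin.val_natAdd, add_lt_add_iff_left]
  congr 1
  exact sum_congr rfl fun i _ => by rw [if_pos (by omega), if_pos i.is_lt]

lemma height_not (s : Fin n → Bool) : height (fun i => !s i) = -height s := by
  ext k
  simp only [height, Pi.neg_apply, ← sum_neg_distrib]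
  exact sum_congr rfl fun i _ => by cases s i <;> rfl

lemma height_eq_two_mul_card_sub (s : Fin n → Bool) : height s n = 2 * #{i | s i = true} - n := by
  have hsplit := card_filter_add_card_filter_not (s := (univ : Finset (Fin n))) (s · = true)
  have hdiff : height s n = #{i | s i = true} - #{i | ¬s i = true} := by
    simp [height, step, sum_ite, sub_eq_add_neg]
  rw [card_univ, Fintype.card_fin] at hsplit
  omega

lemma forall_le_succ_iff_cons (b : Bool) (t : Fin n → Bool) (p : ℤ → Prop) :
    (∀ k ≤ n + 1, p (height (Fin.cons b t : Fin (n + 1) → Bool) k)) ↔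
      p 0 ∧ ∀ k ≤ n, p (step b + height t k) := by
  constructor
  · intro H
    refine ⟨by simpa using H 0 (Nat.zero_le _), fun k hk => ?_⟩
    simpa [height_cons_succ] using H (k + 1) (by omega)
  · rintro ⟨h0, H⟩ (_ | k) hk
    · simpa using h0
    · simpa [height_cons_succ] using H k (by omega)

lemma forall_le_succ_pos_iff_cons (b : Bool) (t : Fin n → Bool) (p : ℤ → Prop) :
    (∀ k ≤ n + 1, 0 < k → p (height (Fin.cons b t : Fin (n + 1) → Bool) k)) ↔
      ∀ k ≤ n, p (step b + height t k) := by
  constructor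
  · intro H k hk
    simpa [height_cons_succ] using H (k + 1) (by omega) k.succ_pos
  · rintro H (_ | k) hk hk0
    · omega
    · simpa [height_cons_succ] using H k (by omega)

lemma card_filter_cons (Q : (Fin (n + 1) → Bool) → Prop) [DecidablePred Q] :
    #{s | Q s} =
      #{t : Fin n → Bool | Q (Fin.cons true t)} + #{t : Fin n → Bool | Q (Fin.cons false t)} := by
  simp only [card_filter, ← (Fin.consEquiv fun _ => Bool).sum_comp, Fintype.sum_prod_type,
    Fintype.sum_bool]
  rfl

lemma card_filter_height_neg (Q : (ℕ → ℤ) → Prop) [DecidablePred Q] :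
    #{s : Fin n → Bool | Q (height s)} = #{s : Fin n → Bool | Q (-height s)} :=
  card_equiv (Equiv.piCongrRight fun _ => Equiv.boolNot) fun s => by
    simp only [mem_filter, mem_univ, true_and]
    change _ ↔ Q (-height fun i => !s i)
    rw [height_not, neg_neg]

/-- The reflection principle at level `-1`: reflecting after the first visit to `-1`, the walks
from `h` that visit `-1` and end at a level `≥ 0` correspond to the walks ending at a level `≤ -2`,
and flipping every step, to the walks whose displacement is `≥ h + 2`. -/
lemma card_avoid_neg_one_add_card_le {h : ℤ} (hh : -1 ≤ h) :
    #{s : Fin n → Bool | ∀ k ≤ n, h + height s k ≠ -1} + #{s : Fin n → Bool | h + 2 ≤ height s n} =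
      #{s : Fin n → Bool | -h ≤ height s n} := by
  induction n generalizing h with
  | zero =>
    simp only [Nat.le_zero, forall_eq, height_zero]
    have hempty : #{s : Fin 0 → Bool | h + 2 ≤ 0} = 0 :=
      card_eq_zero.2 <| filter_false_of_mem fun _ _ => by omega
    rw [hempty, add_zero]
    exact congrArg card <| filter_congr fun _ _ => by omega
  | succ n ih =>
    have tail (a c : ℤ) : #{t : Fin n → Bool | a ≤ c + height t n} = #{t | a - c ≤ height t n} :=
      congrArg card <| filter_congr fun t _ => by omega
    simp only [card_filter_cons (n := n), forall_le_succ_iff_cons _ _ (fun x => h + x ≠ -1),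
      height_cons_succ, step, if_true, Bool.false_eq_true, if_false, tail]
    rcases hh.eq_or_lt with rfl | hh
    · simp
    have hup := ih (h := h + 1) (by omega)
    have hdown := ih (h := h - 1) (by omega)
    simp only [← add_assoc, add_zero, show h ≠ -1 by omega, ne_eq, not_false_eq_true, true_and]
    ring_nf at hup hdown ⊢
    omega

end Paths

lemma card_filter_card_eq_choose {α : Type*} [Fintype α] [DecidableEq α] (k : ℕ) :
    #{s : α → Bool | #{i | s i = true} = k} = (Fintype.card α).choose k := by
  rw [← card_univ, ← card_powersetCard]
  refine card_nbij' (fun s => ({i | s i = true} : Finset α)) (fun A i => i ∈ A) ?_ ?_ ?_ ?_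
  · intro s hs
    simpa using hs
  · intro A hA
    simpa using hA
  · intro s _
    funext i
    simp
  · intro A _
    ext i
    simp

lemma card_height_eq_zero (n : ℕ) :
    #{s : Fin (2 * n) → Bool | height s (2 * n) = 0} = (2 * n).choose n := by
  rw [← Fintype.card_fin (2 * n), ← card_filter_card_eq_choose, Fintype.card_fin]
  exact congrArg card <| filter_congr fun s _ => by rw [height_eq_two_mul_card_sub]; omega

lemma card_no_return (n : ℕ) :
    #{s : Fin (2 * n) → Bool | ∀ k ≤ 2 * n, 0 < k → height s k ≠ 0} =
      #{s : Fin (2 * n) → Bool | height s (2 * n) = 0} := by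
  cases n with
  | zero => exact congrArg card <| filter_congr fun s _ => by simp
  | succ n =>
    set N := 2 * n + 1 with hN
    change #{s : Fin (N + 1) → Bool | ∀ k ≤ N + 1, 0 < k → height s k ≠ 0} =
      #{s : Fin (N + 1) → Bool | height s (N + 1) = 0}
    rw [card_filter_cons (fun s => ∀ k ≤ N + 1, 0 < k → height s k ≠ 0),
      card_filter_cons (fun s => height s (N + 1) = 0)]
    simp only [forall_le_succ_pos_iff_cons _ _ (· ≠ 0), height_cons_succ, step, if_true,
      Bool.false_eq_true, if_false]
    have hreflect := card_avoid_neg_one_add_card_le (n := N) (h := 0) (by norm_num)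
    have hup : #{t : Fin N → Bool | ∀ k ≤ N, 1 + height t k ≠ 0} =
        #{t : Fin N → Bool | ∀ k ≤ N, 0 + height t k ≠ -1} :=
      congrArg card <| filter_congr fun t _ => forall₂_congr fun k _ => by omega
    -- `height t N` is odd, so it is `≥ 0` exactly when it is `1` or `≥ 2`
    have hparity : #{t : Fin N → Bool | 0 ≤ height t N} =
        #{t : Fin N → Bool | -1 + height t N = 0} + #{t : Fin N → Bool | 2 ≤ height t N} := by
      rw [← card_union_of_disjoint (disjoint_filter.2 fun t _ h1 h2 => by omega), ← filter_or]
      exact congrArg card <| filter_congr fun t _ => by have := height_eq_two_mul_card_sub t; omega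
    have hdown : #{t : Fin N → Bool | ∀ k ≤ N, -1 + height t k ≠ 0} =
        #{t : Fin N → Bool | ∀ k ≤ N, 1 + height t k ≠ 0} := by
      rw [card_filter_height_neg (fun f => ∀ k ≤ N, -1 + f k ≠ 0)]
      exact congrArg card <| filter_congr fun t _ => forall₂_congr fun k _ => by
        simp only [Pi.neg_apply]; omega
    have hend : #{t : Fin N → Bool | 1 + height t N = 0} =
        #{t : Fin N → Bool | -1 + height t N = 0} := by
      rw [card_filter_height_neg (fun f => 1 + f N = 0)]
      exact congrArg card <| filter_congr fun t _ => by simp only [Pi.neg_apply]; omega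
    simp only [zero_add, neg_zero] at hreflect hparity hup
    omega

lemma card_last_zero_eq_mul (a b : ℕ) :
    #{s : Fin (a + b) → Bool | height s a = 0 ∧ ∀ j ≤ a + b, a < j → height s j ≠ 0} =
      #{u : Fin a → Bool | height u a = 0} *
        #{v : Fin b → Bool | ∀ j ≤ b, 0 < j → height v j ≠ 0} := by
  rw [← card_product, ← filter_product, univ_product_univ]
  refine (card_equiv (Fin.appendEquiv a b) fun p => ?_).symm
  obtain ⟨u, v⟩ := p
  simp only [mem_filter, mem_univ, true_and]
  change _ ↔ height (Fin.append u v) a = 0 ∧ ∀ j ≤ a + b, a < j → height (Fin.append u v) j ≠ 0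
  rw [height_append_of_le _ _ le_rfl]
  refine and_congr_right fun hu => ⟨fun H j hj haj => ?_, fun H j hj hj0 => ?_⟩
  · obtain ⟨j, rfl⟩ := Nat.exists_eq_add_of_lt haj
    rw [add_assoc, height_append_add, hu, zero_add]
    exact H _ (by omega) (by omega)
  · simpa [height_append_add, hu] using H (a + j) (by omega) (by omega)

theorem card_last_zero (k n : ℕ) :
    #{s : Fin (2 * k + 2 * n) → Bool |
        height s (2 * k) = 0 ∧ ∀ j ≤ 2 * k + 2 * n, 2 * k < j → height s j ≠ 0} =
      (2 * k).choose k * (2 * n).choose n := by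
  rw [card_last_zero_eq_mul, card_no_return, card_height_eq_zero, card_height_eq_zero]

def signs (n : ℕ) (f : ℕ → ℤ) : Fin n → Bool := fun i => f i = 1

lemma sum_range_eq_height_signs {f : ℕ → ℤ} (hf : ∀ i, f i = 1 ∨ f i = -1) {n j : ℕ}
    (hj : j ≤ n) : ∑ i ∈ range j, f i = height (signs n f) j := by
  have hstep (i : ℕ) : step (f i = 1) = f i := by rcases hf i with h | h <;> simp [h, step]
  simp only [height, signs, hstep, sum_filter]
  rw [Fin.sum_univ_eq_sum_range (fun i => if i < j then f i else 0), ← sum_filter]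
  congr 1
  ext i
  simp only [mem_range, mem_filter]
  omega

section Probability

variable {Ω : Type*} [MeasurableSpace Ω] {P : Measure Ω} [IsProbabilityMeasure P]
  {ξ : ℕ → Ω → ℤ}

lemma measurable_signs (hm : ∀ i, Measurable (ξ i)) (n : ℕ) :
    Measurable fun ω => signs n (ξ · ω) :=
  measurable_pi_lambda _ fun i =>
    (Measurable.of_discrete (f := fun z : ℤ => decide (z = 1))).comp (hm i)

lemma measure_signs_preimage_singleton (hm : ∀ i, Measurable (ξ i)) (hindep : iIndepFun ξ P)
    (h1 : ∀ i, P {ω | ξ i ω = 1} = 1 / 2) {n : ℕ} (s : Fin n → Bool) :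
    P ((fun ω => signs n (ξ · ω)) ⁻¹' {s}) = 2⁻¹ ^ n := by
  have hset : (fun ω => signs n (ξ · ω)) ⁻¹' {s} =
      ⋂ i ∈ (univ : Finset (Fin n)), ξ i ⁻¹' (if s i then {1} else {1}ᶜ) := by
    ext ω
    simp only [Set.mem_preimage, Set.mem_singleton_iff, funext_iff, signs, mem_univ,
      Set.iInter_true, Set.mem_iInter]
    refine forall_congr' fun i => ?_
    cases s i <;> simp
  have hfactor (i : ℕ) (b : Bool) : P (ξ i ⁻¹' (if b then {1} else {1}ᶜ)) = 2⁻¹ := by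
    have hup : P (ξ i ⁻¹' {1}) = 2⁻¹ := by rw [← one_div]; exact h1 i
    cases b
    · simp [Set.preimage_compl, prob_compl_eq_one_sub ((hm i) (measurableSet_singleton 1)), hup,
        ENNReal.one_sub_inv_two]
    · simpa using hup
  rw [hset, (hindep.precomp Fin.val_injective).measure_inter_preimage_eq_mul _ fun i _ => ?_]
  · simp [hfactor]
  · split_ifs
    exacts [measurableSet_singleton 1, (measurableSet_singleton 1).compl]

lemma measure_signs_preimage (hm : ∀ i, Measurable (ξ i)) (hindep : iIndepFun ξ P)
    (h1 : ∀ i, P {ω | ξ i ω = 1} = 1 / 2) {n : ℕ} (A : Finset (Fin n → Bool)) :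
    P ((fun ω => signs n (ξ · ω)) ⁻¹' A) = #A * 2⁻¹ ^ n := by
  rw [← sum_measure_preimage_singleton _ fun s _ => measurable_signs hm n (measurableSet_singleton s)]
  simp [measure_signs_preimage_singleton hm hindep h1]

lemma ae_eq_one_or_eq_neg_one (hm : ∀ i, Measurable (ξ i))
    (h1 : ∀ i, P {ω | ξ i ω = 1} = 1 / 2) (h2 : ∀ i, P {ω | ξ i ω = -1} = 1 / 2) :
    ∀ᵐ ω ∂P, ∀ i, ξ i ω = 1 ∨ ξ i ω = -1 := by
  refine ae_all_iff.2 fun i => ?_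
  have hmeas (z : ℤ) : MeasurableSet {ω | ξ i ω = z} := (hm i) (measurableSet_singleton z)
  have hdisj : Disjoint {ω | ξ i ω = 1} {ω | ξ i ω = -1} :=
    Set.disjoint_left.2 fun ω h h' => by simp_all
  have hfull : P {ω | ξ i ω = 1 ∨ ξ i ω = -1} = 1 := by
    rw [Set.ofPred_or, measure_union hdisj (hmeas (-1)), h1, h2, ENNReal.add_halves]
  have hmeas' : MeasurableSet {ω | ξ i ω = 1 ∨ ξ i ω = -1} := (hmeas 1).union (hmeas (-1))
  exact (ae_iff_measure_eq hmeas'.nullMeasurableSet).2 (by rw [hfull, measure_univ])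

end Probability

end SimpleRandomWalk

open SimpleRandomWalk Finset in
theorem srw_discrete_arcsine_law {Ω : Type*} [MeasurableSpace Ω]
    (P : Measure Ω) [IsProbabilityMeasure P] (ξ : ℕ → Ω → ℤ)
    (hm : ∀ i, Measurable (ξ i))
    (hindep : iIndepFun ξ P)
    (h1 : ∀ i, P {ω | ξ i ω = 1} = 1 / 2)
    (h2 : ∀ i, P {ω | ξ i ω = -1} = 1 / 2)
    (m : ℕ) (L : Ω → ℕ)
    (hL : ∀ ω, L ω = sSup {k | k ≤ 2 * m ∧ ∑ i ∈ Finset.range k, ξ i ω = 0}) :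
    ∀ k, k ≤ m → P {ω | L ω = 2 * k}
      = ENNReal.ofReal (((Nat.choose (2 * k) k : ℝ) / 2 ^ (2 * k)) *
          ((Nat.choose (2 * (m - k)) (m - k) : ℝ) / 2 ^ (2 * (m - k)))) := by
  intro k hk
  obtain ⟨n, rfl⟩ := Nat.exists_eq_add_of_le hk
  rw [Nat.add_sub_cancel_left]
  set A : Finset (Fin (2 * k + 2 * n) → Bool) :=
    {s | height s (2 * k) = 0 ∧ ∀ j ≤ 2 * k + 2 * n, 2 * k < j → height s j ≠ 0}
  have hevent : {ω | L ω = 2 * k} =ᵐ[P] (fun ω => signs (2 * k + 2 * n) (ξ · ω)) ⁻¹' A := by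
    refine Filter.eventuallyEq_set.2 ?_
    filter_upwards [ae_eq_one_or_eq_neg_one hm h1 h2] with ω hω
    have hS {j : ℕ} (hj : j ≤ 2 * k + 2 * n) := sum_range_eq_height_signs hω hj
    rw [hL, mul_add, Nat.sSup_setOf_le_and_eq_iff (p := fun j => ∑ i ∈ range j, ξ i ω = 0)
      (sum_range_zero _), and_iff_right (by omega), hS (by omega)]
    simp only [Set.mem_preimage, mem_coe, A, mem_filter, mem_univ, true_and]
    exact and_congr_right fun _ => forall₃_congr fun j hj _ => by rw [hS hj]
  rw [measure_congr hevent, measure_signs_preimage hm hindep h1, card_last_zero,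
    ENNReal.ofReal_div_two_pow_mul_div_two_pow]
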